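/- The six real vector fields R = 2Re(-z₂∂_{z₂} + 2w∂_w), S = Re(iz₁∂_{z₁}), J = -2Re(iz₂∂_{z₂}), X = Re(iz₁z₂w∂_{z₁} + ∂_{z₂} + 2iz₂w²∂_w), Y = Re(z₁z₂w∂_{z₁} + i∂_{z₂} + 2z₂w²∂_w), Z = Re(z₁w∂_{z₁} + 2w²∂_w) satisfy [X,Y] = Z, [R,X] = X, [R,Y] = Y, [R,Z] = 2Z, [J,X] = Y, [J,Y] = -X, and S commutes with X, Y, Z, R, J. -/

import Mathlib

/-!
The fields `R, S, J` are ℝ-linear, so they are their own derivatives, and `X, Y, Z` are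
polynomial maps whose derivatives are read off by the product rule. With these derivatives
every bracket becomes a polynomial identity in the coordinates, valid once `i² = -1`.
-/

open Complex

/-- Lie bracket of (real-analytic) vector fields on `ℂ³ ≅ ℝ⁶`, written as maps
`ℂ×ℂ×ℂ → ℂ×ℂ×ℂ` under the identification of a real tangent vector with its
`(∂_{z₁},∂_{z₂},∂_w)`-components. -/
noncomputable def brkt (f g : ℂ × ℂ × ℂ → ℂ × ℂ × ℂ) : ℂ × ℂ × ℂ → ℂ × ℂ × ℂ :=
  fun p => fderiv ℝ g p (f p) - fderiv ℝ f p (g p)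

/-- `R = 2Re(-z₂∂_{z₂} + 2w∂_w)`. -/
noncomputable def fR : ℂ × ℂ × ℂ → ℂ × ℂ × ℂ := fun p => (0, -p.2.1, 2 * p.2.2)
/-- `S = Re(iz₁∂_{z₁})`. -/
noncomputable def fS : ℂ × ℂ × ℂ → ℂ × ℂ × ℂ := fun p => (Complex.I * p.1 / 2, 0, 0)
/-- `J = -2Re(iz₂∂_{z₂})`. -/
noncomputable def fJ : ℂ × ℂ × ℂ → ℂ × ℂ × ℂ := fun p => (0, -Complex.I * p.2.1, 0)
/-- `X = Re(iz₁z₂w∂_{z₁} + ∂_{z₂} + 2iz₂w²∂_w)`. -/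
noncomputable def fX : ℂ × ℂ × ℂ → ℂ × ℂ × ℂ :=
  fun p => (Complex.I * p.1 * p.2.1 * p.2.2 / 2, 1 / 2, Complex.I * p.2.1 * p.2.2^2)
/-- `Y = Re(z₁z₂w∂_{z₁} + i∂_{z₂} + 2z₂w²∂_w)`. -/
noncomputable def fY : ℂ × ℂ × ℂ → ℂ × ℂ × ℂ :=
  fun p => (p.1 * p.2.1 * p.2.2 / 2, Complex.I / 2, p.2.1 * p.2.2^2)
/-- `Z = Re(z₁w∂_{z₁} + 2w²∂_w)`. -/
noncomputable def fZ : ℂ × ℂ × ℂ → ℂ × ℂ × ℂ := fun p => (p.1 * p.2.2 / 2, 0, p.2.2^2)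

section Coordinates
variable (p : ℂ × ℂ × ℂ)

theorem hasFDerivAt_coord₁ :
    HasFDerivAt (fun q : ℂ × ℂ × ℂ => q.1) (ContinuousLinearMap.fst ℝ ℂ (ℂ × ℂ)) p :=
  hasFDerivAt_fst

theorem hasFDerivAt_coord₂ : HasFDerivAt (fun q : ℂ × ℂ × ℂ => q.2.1)
    ((ContinuousLinearMap.fst ℝ ℂ ℂ).comp (ContinuousLinearMap.snd ℝ ℂ (ℂ × ℂ))) p :=
  hasFDerivAt_snd.fst

theorem hasFDerivAt_coord₃ : HasFDerivAt (fun q : ℂ × ℂ × ℂ => q.2.2)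
    ((ContinuousLinearMap.snd ℝ ℂ ℂ).comp (ContinuousLinearMap.snd ℝ ℂ (ℂ × ℂ))) p :=
  hasFDerivAt_snd.snd

end Coordinates

theorem fderiv_fR_apply (p v : ℂ × ℂ × ℂ) : fderiv ℝ fR p v = fR v := by
  have h : HasFDerivAt fR _ p := (hasFDerivAt_const _ p).prodMk
    ((hasFDerivAt_coord₂ p).neg.prodMk ((hasFDerivAt_coord₃ p).const_mul 2))
  rw [h.fderiv]
  simp [fR]

theorem fderiv_fS_apply (p v : ℂ × ℂ × ℂ) : fderiv ℝ fS p v = fS v := by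
  have h : HasFDerivAt fS _ p := (((hasFDerivAt_coord₁ p).const_mul I).mul_const (2⁻¹ : ℂ)).prodMk
    ((hasFDerivAt_const _ p).prodMk (hasFDerivAt_const _ p))
  rw [h.fderiv]
  simp [fS, div_eq_mul_inv, mul_comm]

theorem fderiv_fJ_apply (p v : ℂ × ℂ × ℂ) : fderiv ℝ fJ p v = fJ v := by
  have h : HasFDerivAt fJ _ p := (hasFDerivAt_const _ p).prodMk
    (((hasFDerivAt_coord₂ p).const_mul (-I)).prodMk (hasFDerivAt_const _ p))
  rw [h.fderiv]
  simp [fJ]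

theorem fderiv_fX_apply (p v : ℂ × ℂ × ℂ) : fderiv ℝ fX p v =
    (I / 2 * (v.1 * p.2.1 * p.2.2 + p.1 * v.2.1 * p.2.2 + p.1 * p.2.1 * v.2.2), 0,
      I * (v.2.1 * p.2.2 ^ 2 + 2 * p.2.1 * p.2.2 * v.2.2)) := by
  have h : HasFDerivAt fX _ p :=
    (((((hasFDerivAt_coord₁ p).const_mul I).mul (hasFDerivAt_coord₂ p)).mul
      (hasFDerivAt_coord₃ p)).mul_const (2⁻¹ : ℂ)).prodMk ((hasFDerivAt_const _ p).prodMk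
        (((hasFDerivAt_coord₂ p).const_mul I).mul ((hasFDerivAt_coord₃ p).pow 2)))
  rw [h.fderiv]
  ext <;> simp only [ContinuousLinearMap.prod_apply, add_apply, smul_apply, zero_apply,
    ContinuousLinearMap.comp_apply, ContinuousLinearMap.coe_fst', ContinuousLinearMap.coe_snd',
    Pi.mul_apply, smul_eq_mul, nsmul_eq_mul, Nat.cast_ofNat, Nat.add_one_sub_one, pow_one] <;> ring

theorem fderiv_fY_apply (p v : ℂ × ℂ × ℂ) : fderiv ℝ fY p v =
    ((v.1 * p.2.1 * p.2.2 + p.1 * v.2.1 * p.2.2 + p.1 * p.2.1 * v.2.2) / 2, 0,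
      v.2.1 * p.2.2 ^ 2 + 2 * p.2.1 * p.2.2 * v.2.2) := by
  have h : HasFDerivAt fY _ p :=
    ((((hasFDerivAt_coord₁ p).mul (hasFDerivAt_coord₂ p)).mul (hasFDerivAt_coord₃ p)).mul_const
      (2⁻¹ : ℂ)).prodMk ((hasFDerivAt_const _ p).prodMk
        ((hasFDerivAt_coord₂ p).mul ((hasFDerivAt_coord₃ p).pow 2)))
  rw [h.fderiv]
  ext <;> simp only [ContinuousLinearMap.prod_apply, add_apply, smul_apply, zero_apply,
    ContinuousLinearMap.comp_apply, ContinuousLinearMap.coe_fst', ContinuousLinearMap.coe_snd',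
    Pi.mul_apply, smul_eq_mul, nsmul_eq_mul, Nat.cast_ofNat, Nat.add_one_sub_one, pow_one] <;> ring

theorem fderiv_fZ_apply (p v : ℂ × ℂ × ℂ) : fderiv ℝ fZ p v =
    ((v.1 * p.2.2 + p.1 * v.2.2) / 2, 0, 2 * p.2.2 * v.2.2) := by
  have h : HasFDerivAt fZ _ p :=
    (((hasFDerivAt_coord₁ p).mul (hasFDerivAt_coord₃ p)).mul_const (2⁻¹ : ℂ)).prodMk
      ((hasFDerivAt_const _ p).prodMk ((hasFDerivAt_coord₃ p).pow 2))
  rw [h.fderiv]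
  ext <;> simp only [ContinuousLinearMap.prod_apply, add_apply, smul_apply, zero_apply,
    ContinuousLinearMap.comp_apply, ContinuousLinearMap.coe_fst', ContinuousLinearMap.coe_snd',
    smul_eq_mul, nsmul_eq_mul, Nat.cast_ofNat, Nat.add_one_sub_one, pow_one]
  all_goals ring

/-- The vector fields `R, S, J, X, Y, Z` satisfy `[X,Y] = Z`, `[R,X] = X`, `[R,Y] = Y`,
`[R,Z] = 2Z`, `[J,X] = Y`, `[J,Y] = -X`, and `S` commutes with `X, Y, Z, R, J`. -/
theorem stmt16 :
    brkt fX fY = fZ ∧ brkt fR fX = fX ∧ brkt fR fY = fY ∧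
    brkt fR fZ = (fun p => (2:ℂ) • fZ p) ∧ brkt fJ fX = fY ∧
    brkt fJ fY = (fun p => -fX p) ∧
    brkt fS fX = (fun _ => 0) ∧ brkt fS fY = (fun _ => 0) ∧
    brkt fS fZ = (fun _ => 0) ∧ brkt fS fR = (fun _ => 0) ∧
    brkt fS fJ = (fun _ => 0) := by
  refine ⟨?_, ?_, ?_, ?_, ?_, ?_, ?_, ?_, ?_, ?_, ?_⟩ <;> funext p <;>
    simp only [brkt, fderiv_fX_apply, fderiv_fY_apply, fderiv_fZ_apply, fderiv_fR_apply,
      fderiv_fS_apply, fderiv_fJ_apply, fR, fS, fJ, fX, fY, fZ, Prod.ext_iff, Prod.fst_sub,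
      Prod.snd_sub, Prod.smul_fst, Prod.smul_snd, Prod.fst_neg, Prod.snd_neg, Prod.fst_zero,
      Prod.snd_zero, smul_eq_mul] <;>
    grind [I_sq]
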